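/- arXiv:1403.6974 — 2 statements merged into one kernel-verified Lean document; each statement's English description precedes it below -/
import Mathlib

section
/- Suppose A has restricted isometry constant δ_{S+T}, and let 𝒮 and 𝒯 be disjoint index sets with |𝒮| + |𝒯| ≤ S + T. Then the spectral norm satisfies ‖A_𝒮* A_𝒯‖ ≤ δ_{S+T}. -/
open Matrix Finset

/-- Euclidean (ℓ2) norm of a finitely-indexed real vector. -/
noncomputable def enorm {ι : Type*} [Fintype ι] (x : ι → ℝ) : ℝ :=
  Real.sqrt (∑ i, x i ^ 2)

/-- `x` is `T`-sparse: it has at most `T` nonzero entries. -/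
def sparse {N : ℕ} (T : ℕ) (x : Fin N → ℝ) : Prop :=
  (Finset.univ.filter (fun i => x i ≠ 0)).card ≤ T

/-- Support of a vector as a finset. -/
noncomputable def fsupp {N : ℕ} (x : Fin N → ℝ) : Finset (Fin N) :=
  Finset.univ.filter (fun i => x i ≠ 0)

/-- Restricted isometry property with constant `δ` at sparsity level `T`. -/
def RIP {M N : ℕ} (A : Matrix (Fin M) (Fin N) ℝ) (T : ℕ) (δ : ℝ) : Prop :=
  ∀ x : Fin N → ℝ, sparse T x →
    (1 - δ) * _root_.enorm x ^ 2 ≤ _root_.enorm (A.mulVec x) ^ 2 ∧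
    _root_.enorm (A.mulVec x) ^ 2 ≤ (1 + δ) * _root_.enorm x ^ 2

/-- Column submatrix of `A` indexed by the finset `𝒯`. -/
def cols {M N : ℕ} (A : Matrix (Fin M) (Fin N) ℝ) (𝒯 : Finset (Fin N)) :
    Matrix (Fin M) 𝒯 ℝ := A.submatrix id (fun i => (i : Fin N))

/-- Pseudo-inverse `(Bᵀ B)⁻¹ Bᵀ` (full column rank assumed where used). -/
noncomputable def pinv {M : ℕ} {ι : Type*} [Fintype ι] [DecidableEq ι]
    (B : Matrix (Fin M) ι ℝ) : Matrix ι (Fin M) ℝ := (Bᵀ * B)⁻¹ * Bᵀ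

/-- `x` restricted to the index set `S` (zero off `S`). -/
def restr {N : ℕ} (x : Fin N → ℝ) (S : Finset (Fin N)) : Fin N → ℝ :=
  fun i => if i ∈ S then x i else 0

/-- Zero-pad a vector indexed by `S` to a full-length vector. -/
noncomputable def scatter {N : ℕ} (S : Finset (Fin N)) (v : S → ℝ) : Fin N → ℝ :=
  fun i => if h : i ∈ S then v ⟨i, h⟩ else 0

/-!
Polarization: if `u` and `v` are orthogonal and `u ± v` are sparse, the RIP bounds on
`‖A(u + v)‖²` and `‖A(u - v)‖²` give `⟪Au, Av⟫ ≤ δ/2 (‖u‖² + ‖v‖²)`, and rescaling `u` and `v`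
sharpens this to `⟪Au, Av⟫ ≤ δ ‖u‖ ‖v‖` for vectors with disjoint supports. For `w = A_𝒮ᵀ A_𝒯 x`,
zero-padding `w` to `𝒮` and `x` to `𝒯` gives `‖w‖² = ⟪A w, A x⟫ ≤ δ ‖w‖ ‖x‖`.
-/

lemma enorm_nonneg {ι : Type*} [Fintype ι] (x : ι → ℝ) : 0 ≤ _root_.enorm x :=
  Real.sqrt_nonneg _

lemma sq_enorm {ι : Type*} [Fintype ι] (x : ι → ℝ) : _root_.enorm x ^ 2 = x ⬝ᵥ x := by
  rw [_root_.enorm, Real.sq_sqrt (by positivity)]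
  simp only [dotProduct, sq]

lemma sparse_of_forall_notMem {N k : ℕ} {x : Fin N → ℝ} (s : Finset (Fin N)) (hs : s.card ≤ k)
    (hx : ∀ i ∉ s, x i = 0) : sparse k x :=
  (Finset.card_le_card fun i hi => by
    by_contra his
    exact (Finset.mem_filter.mp hi).2 (hx i his)).trans hs

lemma dotProduct_eq_zero_of_disjoint {N : ℕ} {s t : Finset (Fin N)} (hst : Disjoint s t)
    {u v : Fin N → ℝ} (hu : ∀ i ∉ s, u i = 0) (hv : ∀ i ∉ t, v i = 0) : u ⬝ᵥ v = 0 :=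
  Finset.sum_eq_zero fun i _ => by
    by_cases hi : i ∈ s
    · rw [hv i (Finset.disjoint_left.mp hst hi), mul_zero]
    · rw [hu i hi, zero_mul]

section scatter

variable {N : ℕ} (s : Finset (Fin N)) (v : s → ℝ)

lemma scatter_coe (i : s) : scatter s v i = v i := dif_pos i.2

lemma scatter_of_notMem {i : Fin N} (hi : i ∉ s) : scatter s v i = 0 := dif_neg hi

lemma dotProduct_scatter (y : Fin N → ℝ) : y ⬝ᵥ scatter s v = (fun i : s => y i) ⬝ᵥ v := by
  simp only [dotProduct, ← scatter_coe s v]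
  rw [Finset.sum_coe_sort s fun i => y i * scatter s v i]
  exact (Finset.sum_subset (Finset.subset_univ s) fun i _ hi => by
    rw [scatter_of_notMem s v hi, mul_zero]).symm

lemma mulVec_scatter {M : ℕ} (A : Matrix (Fin M) (Fin N) ℝ) :
    A *ᵥ scatter s v = cols A s *ᵥ v :=
  funext fun m => dotProduct_scatter s v (A m)

lemma enorm_scatter : _root_.enorm (scatter s v) = _root_.enorm v := by
  rw [← sq_eq_sq₀ (enorm_nonneg _) (enorm_nonneg _), sq_enorm, sq_enorm, dotProduct_scatter]
  simp only [scatter_coe]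

end scatter

namespace RIP

variable {M N k : ℕ} {A : Matrix (Fin M) (Fin N) ℝ} {δ : ℝ}

lemma dotProduct_mulVec_le_of_dotProduct_eq_zero (hA : RIP A k δ) {u v : Fin N → ℝ}
    (hadd : sparse k (u + v)) (hsub : sparse k (u - v)) (huv : u ⬝ᵥ v = 0) :
    (A *ᵥ u) ⬝ᵥ (A *ᵥ v) ≤ δ / 2 * (u ⬝ᵥ u + v ⬝ᵥ v) := by
  have hvu : v ⬝ᵥ u = 0 := by rw [dotProduct_comm, huv]
  have hAvu : (A *ᵥ v) ⬝ᵥ (A *ᵥ u) = (A *ᵥ u) ⬝ᵥ (A *ᵥ v) := dotProduct_comm _ _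
  have hupper := (hA _ hadd).2
  have hlower := (hA _ hsub).1
  simp only [sq_enorm, mulVec_add, mulVec_sub, add_dotProduct, dotProduct_add, sub_dotProduct,
    dotProduct_sub, huv, hvu, hAvu] at hupper hlower
  linarith

lemma dotProduct_mulVec_le_of_disjoint (hA : RIP A k δ) {s t : Finset (Fin N)}
    (hst : Disjoint s t) (hcard : s.card + t.card ≤ k) {u v : Fin N → ℝ}
    (hu : ∀ i ∉ s, u i = 0) (hv : ∀ i ∉ t, v i = 0) :
    (A *ᵥ u) ⬝ᵥ (A *ᵥ v) ≤ δ * _root_.enorm u * _root_.enorm v := by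
  rcases (mul_nonneg (enorm_nonneg u) (enorm_nonneg v)).eq_or_lt with hab | hab
  · rcases mul_eq_zero.mp hab.symm with ha | hb
    · have hu0 : u = 0 := by rwa [← sq_eq_zero_iff, sq_enorm, dotProduct_self_eq_zero] at ha
      rw [ha, hu0, mulVec_zero, zero_dotProduct, mul_zero, zero_mul]
    · have hv0 : v = 0 := by rwa [← sq_eq_zero_iff, sq_enorm, dotProduct_self_eq_zero] at hb
      rw [hb, hv0, mulVec_zero, dotProduct_zero, mul_zero]
  -- Rescale to `‖v‖ • u` and `‖u‖ • v`, which have equal norms.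
  have hbu : ∀ i ∉ s, (_root_.enorm v • u) i = 0 := fun i hi => by rw [Pi.smul_apply, hu i hi, smul_zero]
  have hav : ∀ i ∉ t, (_root_.enorm u • v) i = 0 := fun i hi => by rw [Pi.smul_apply, hv i hi, smul_zero]
  have hsparse : ∀ w : Fin N → ℝ, (∀ i ∉ s ∪ t, w i = 0) → sparse k w := fun w hw =>
    sparse_of_forall_notMem (s ∪ t) ((Finset.card_union_of_disjoint hst).trans_le hcard) hw
  have hzero : ∀ i ∉ s ∪ t, (_root_.enorm v • u) i = 0 ∧ (_root_.enorm u • v) i = 0 :=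
    fun i hi => by
      rw [Finset.mem_union, not_or] at hi
      exact ⟨hbu i hi.1, hav i hi.2⟩
  have hbound := hA.dotProduct_mulVec_le_of_dotProduct_eq_zero
    (hsparse _ fun i hi => by rw [Pi.add_apply, (hzero i hi).1, (hzero i hi).2, add_zero])
    (hsparse _ fun i hi => by rw [Pi.sub_apply, (hzero i hi).1, (hzero i hi).2, sub_zero])
    (dotProduct_eq_zero_of_disjoint hst hbu hav)
  simp only [mulVec_smul, smul_dotProduct, dotProduct_smul, ← sq_enorm, smul_eq_mul] at hbound
  have key : _root_.enorm u * _root_.enorm v * ((A *ᵥ u) ⬝ᵥ (A *ᵥ v)) ≤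
      _root_.enorm u * _root_.enorm v * (δ * _root_.enorm u * _root_.enorm v) := by
    linarith
  exact le_of_mul_le_mul_left key hab

end RIP

theorem stmt3_general {M N S T : ℕ} (A : Matrix (Fin M) (Fin N) ℝ) (δ : ℝ)
    (hδ0 : 0 ≤ δ) (hRIP : RIP A (S + T) δ)
    (𝒮 𝒯 : Finset (Fin N)) (hdisj : Disjoint 𝒮 𝒯)
    (hcard : 𝒮.card + 𝒯.card ≤ S + T) :
    ∀ x : 𝒯 → ℝ,
      _root_.enorm (((cols A 𝒮)ᵀ * cols A 𝒯).mulVec x) ≤ δ * _root_.enorm x := by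
  intro x
  set w := ((cols A 𝒮)ᵀ * cols A 𝒯) *ᵥ x
  have hw : _root_.enorm w * _root_.enorm w ≤ _root_.enorm w * (δ * _root_.enorm x) :=
    calc _root_.enorm w * _root_.enorm w = w ⬝ᵥ w := by rw [← sq, sq_enorm]
      _ = (A *ᵥ scatter 𝒮 w) ⬝ᵥ (A *ᵥ scatter 𝒯 x) := by
        rw [mulVec_scatter, mulVec_scatter, ← vecMul_transpose, ← dotProduct_mulVec,
          mulVec_mulVec]
      _ ≤ δ * _root_.enorm (scatter 𝒮 w) * _root_.enorm (scatter 𝒯 x) :=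
        hRIP.dotProduct_mulVec_le_of_disjoint hdisj hcard (fun _ => scatter_of_notMem 𝒮 w)
          (fun _ => scatter_of_notMem 𝒯 x)
      _ = _root_.enorm w * (δ * _root_.enorm x) := by rw [enorm_scatter, enorm_scatter]; ring
  rcases (enorm_nonneg w).eq_or_lt with hw0 | hwpos
  · rw [← hw0]
    exact mul_nonneg hδ0 (enorm_nonneg x)
  · exact le_of_mul_le_mul_left hw hwpos

theorem stmt3 {M N S T : ℕ} (A : Matrix (Fin M) (Fin N) ℝ) (δ : ℝ)
    (hδ0 : 0 ≤ δ) (hδ1 : δ < 1) (hRIP : RIP A (S + T) δ)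
    (𝒮 𝒯 : Finset (Fin N)) (hdisj : Disjoint 𝒮 𝒯)
    (hcard : 𝒮.card + 𝒯.card ≤ S + T) :
    ∀ x : 𝒯 → ℝ,
      _root_.enorm (((cols A 𝒮)ᵀ * cols A 𝒯).mulVec x) ≤ δ * _root_.enorm x :=
  stmt3_general A δ hδ0 hRIP 𝒮 𝒯 hdisj hcard
end

section
/- Suppose A has restricted isometry constant δ_T. Let 𝒯 be an index set and x a vector such that |𝒯 ∪ supp(x)| ≤ T. Then ‖A_𝒯* A x_{𝒯ᶜ}‖ ≤ δ_T ‖x_{𝒯ᶜ}‖, where x_{𝒯ᶜ} denotes x restricted to the complement of 𝒯 (zero on 𝒯). -/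
open Matrix Finset

/- The vector `w := (cols A 𝒯)ᵀ A x_{𝒯ᶜ}`, padded by zeros, is supported on `𝒯` and hence
orthogonal to `x_{𝒯ᶜ}`, while `⟨A w, A x_{𝒯ᶜ}⟩ = ‖w‖²`. For disjointly supported `u, v` whose
joint support has at most `T` elements, polarization and RIP applied to `u ± v` give
`2 ⟨A u, A v⟩ ≤ δ (‖u‖² + ‖v‖²)`, and rescaling `u, v` to equal norms turns this into
`⟨A u, A v⟩ ≤ δ ‖u‖ ‖v‖`. Hence `‖w‖² ≤ δ ‖w‖ ‖x_{𝒯ᶜ}‖`. -/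

section Euclidean

variable {ι : Type*} [Fintype ι]

theorem enorm_sq (v : ι → ℝ) : _root_.enorm v ^ 2 = ∑ i, v i ^ 2 :=
  Real.sq_sqrt (by positivity)

theorem enorm_sq_eq_dotProduct (v : ι → ℝ) : _root_.enorm v ^ 2 = v ⬝ᵥ v := by
  rw [enorm_sq]
  simp only [dotProduct, sq]

theorem enorm_nonneg_s4 (v : ι → ℝ) : 0 ≤ _root_.enorm v :=
  Real.sqrt_nonneg _

theorem enorm_eq_zero_iff {v : ι → ℝ} : _root_.enorm v = 0 ↔ v = 0 := by
  rw [_root_.enorm, Real.sqrt_eq_zero (by positivity),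
    Finset.sum_eq_zero_iff_of_nonneg (fun i _ => sq_nonneg (v i)), funext_iff]
  simp

theorem enorm_const_smul (c : ℝ) (v : ι → ℝ) :
    _root_.enorm (c • v) = |c| * _root_.enorm v := by
  simp only [_root_.enorm, Pi.smul_apply, smul_eq_mul, mul_pow, ← Finset.mul_sum]
  rw [Real.sqrt_mul (sq_nonneg c), Real.sqrt_sq_eq_abs]

theorem enorm_add_sq_sub_enorm_sub_sq (u v : ι → ℝ) :
    _root_.enorm (u + v) ^ 2 - _root_.enorm (u - v) ^ 2 = 4 * (u ⬝ᵥ v) := by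
  simp only [enorm_sq, dotProduct, Finset.mul_sum, ← Finset.sum_sub_distrib]
  exact Finset.sum_congr rfl fun i _ => by simp only [Pi.add_apply, Pi.sub_apply]; ring

variable {u v : ι → ℝ}

theorem enorm_add_sq_of_mul_eq_zero (huv : ∀ i, u i * v i = 0) :
    _root_.enorm (u + v) ^ 2 = _root_.enorm u ^ 2 + _root_.enorm v ^ 2 := by
  simp only [enorm_sq, ← Finset.sum_add_distrib]
  exact Finset.sum_congr rfl fun i _ => by
    simp only [Pi.add_apply]; linear_combination 2 * huv i

theorem enorm_sub_sq_of_mul_eq_zero (huv : ∀ i, u i * v i = 0) :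
    _root_.enorm (u - v) ^ 2 = _root_.enorm u ^ 2 + _root_.enorm v ^ 2 := by
  simp only [enorm_sq, ← Finset.sum_add_distrib]
  exact Finset.sum_congr rfl fun i _ => by
    simp only [Pi.sub_apply]; linear_combination -2 * huv i

end Euclidean

section Support

variable {N : ℕ}

theorem mem_fsupp {x : Fin N → ℝ} {i : Fin N} : i ∈ fsupp x ↔ x i ≠ 0 := by
  simp [fsupp]

theorem sparse_of_fsupp_subset {T : ℕ} {y : Fin N → ℝ} {S : Finset (Fin N)}
    (h : fsupp y ⊆ S) (hS : S.card ≤ T) : sparse T y :=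
  (Finset.card_le_card h).trans hS

theorem fsupp_add_subset (u v : Fin N → ℝ) : fsupp (u + v) ⊆ fsupp u ∪ fsupp v := by
  intro i
  simp only [Finset.mem_union, mem_fsupp, Pi.add_apply]
  contrapose!
  rintro ⟨hu, hv⟩
  simp [hu, hv]

theorem fsupp_sub_subset (u v : Fin N → ℝ) : fsupp (u - v) ⊆ fsupp u ∪ fsupp v := by
  intro i
  simp only [Finset.mem_union, mem_fsupp, Pi.sub_apply]
  contrapose!
  rintro ⟨hu, hv⟩
  simp [hu, hv]

theorem fsupp_smul_subset (c : ℝ) (v : Fin N → ℝ) : fsupp (c • v) ⊆ fsupp v := by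
  intro i
  simp only [mem_fsupp, Pi.smul_apply, smul_eq_mul]
  exact right_ne_zero_of_mul

theorem fsupp_restr_subset (x : Fin N → ℝ) (S : Finset (Fin N)) :
    fsupp (restr x S) ⊆ fsupp x := by
  intro i
  simp only [mem_fsupp, restr]
  split_ifs <;> simp

theorem fsupp_scatter_subset (S : Finset (Fin N)) (v : S → ℝ) : fsupp (scatter S v) ⊆ S := by
  intro i
  rw [mem_fsupp]
  contrapose!
  exact fun hi => dif_neg hi

theorem scatter_mul_restr_compl (S : Finset (Fin N)) (v : S → ℝ) (x : Fin N → ℝ) (i : Fin N) :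
    scatter S v i * restr x Sᶜ i = 0 := by
  by_cases hi : i ∈ S <;> simp [scatter, restr, hi]

theorem sum_scatter (S : Finset (Fin N)) (v : S → ℝ) (f : Fin N → ℝ → ℝ)
    (hf : ∀ i, f i 0 = 0) : ∑ i, f i (scatter S v i) = ∑ i : S, f i (v i) := by
  rw [← Finset.sum_subset (Finset.subset_univ S) fun i _ hi => by simp [scatter, hi, hf],
    ← Finset.sum_coe_sort]
  exact Finset.sum_congr rfl fun i _ => by simp [scatter]

theorem enorm_scatter_s4 (S : Finset (Fin N)) (v : S → ℝ) :
    _root_.enorm (scatter S v) = _root_.enorm v :=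
  congrArg Real.sqrt (sum_scatter S v (fun _ a => a ^ 2) fun _ => zero_pow two_ne_zero)

theorem mulVec_scatter_dotProduct {M : ℕ} (A : Matrix (Fin M) (Fin N) ℝ) (S : Finset (Fin N))
    (v : S → ℝ) (z : Fin M → ℝ) : A *ᵥ scatter S v ⬝ᵥ z = v ⬝ᵥ (cols A S)ᵀ *ᵥ z := by
  rw [dotProduct_comm, dotProduct_mulVec, ← mulVec_transpose, dotProduct_comm]
  exact sum_scatter S v (fun i a => a * (Aᵀ *ᵥ z) i) fun _ => zero_mul _

end Support

namespace RIP

variable {M N T : ℕ} {A : Matrix (Fin M) (Fin N) ℝ} {δ : ℝ} {u v : Fin N → ℝ}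

theorem two_mul_dotProduct_mulVec_le (hA : RIP A T δ) (huv : ∀ i, u i * v i = 0)
    (hcard : (fsupp u ∪ fsupp v).card ≤ T) :
    2 * (A *ᵥ u ⬝ᵥ A *ᵥ v) ≤ δ * (_root_.enorm u ^ 2 + _root_.enorm v ^ 2) := by
  have hadd := (hA _ (sparse_of_fsupp_subset (fsupp_add_subset u v) hcard)).2
  have hsub := (hA _ (sparse_of_fsupp_subset (fsupp_sub_subset u v) hcard)).1
  have hpolar := enorm_add_sq_sub_enorm_sub_sq (A *ᵥ u) (A *ᵥ v)
  rw [enorm_add_sq_of_mul_eq_zero huv] at hadd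
  rw [enorm_sub_sq_of_mul_eq_zero huv] at hsub
  rw [← mulVec_add, ← mulVec_sub] at hpolar
  linarith

theorem dotProduct_mulVec_le (hA : RIP A T δ) (huv : ∀ i, u i * v i = 0)
    (hcard : (fsupp u ∪ fsupp v).card ≤ T) :
    A *ᵥ u ⬝ᵥ A *ᵥ v ≤ δ * _root_.enorm u * _root_.enorm v := by
  rcases (enorm_nonneg_s4 u).eq_or_lt with ha | ha
  · rw [← ha, mul_zero, zero_mul, enorm_eq_zero_iff.mp ha.symm, mulVec_zero, zero_dotProduct]
  rcases (enorm_nonneg_s4 v).eq_or_lt with hb | hb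
  · rw [← hb, mul_zero, enorm_eq_zero_iff.mp hb.symm, mulVec_zero, dotProduct_zero]
  -- `‖v‖ • u` and `‖u‖ • v` have the same norm `‖u‖ ‖v‖`
  have hscaled := hA.two_mul_dotProduct_mulVec_le (u := _root_.enorm v • u)
    (v := _root_.enorm u • v) (fun i => by
      simp only [Pi.smul_apply, smul_eq_mul]
      linear_combination (_root_.enorm v * _root_.enorm u) * huv i)
    (hcard.trans' (Finset.card_le_card (Finset.union_subset_union
      (fsupp_smul_subset _ u) (fsupp_smul_subset _ v))))
  rw [enorm_const_smul, enorm_const_smul, abs_of_pos ha, abs_of_pos hb, mulVec_smul,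
    mulVec_smul, smul_dotProduct, dotProduct_smul, smul_eq_mul, smul_eq_mul] at hscaled
  have hab := mul_pos ha hb
  nlinarith

end RIP

theorem stmt4_general {M N T : ℕ} (A : Matrix (Fin M) (Fin N) ℝ) (δ : ℝ)
    (hδ0 : 0 ≤ δ) (hRIP : RIP A T δ)
    (𝒯 : Finset (Fin N)) (x : Fin N → ℝ)
    (hcard : (𝒯 ∪ fsupp x).card ≤ T) :
    _root_.enorm ((cols A 𝒯)ᵀ.mulVec (A.mulVec (restr x 𝒯ᶜ))) ≤ δ * _root_.enorm (restr x 𝒯ᶜ) := by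
  set y := restr x 𝒯ᶜ
  set w := (cols A 𝒯)ᵀ *ᵥ (A *ᵥ y)
  have hsupp : (fsupp (scatter 𝒯 w) ∪ fsupp y).card ≤ T :=
    hcard.trans' (card_le_card (union_subset_union (fsupp_scatter_subset 𝒯 w)
      (fsupp_restr_subset x 𝒯ᶜ)))
  have hw : _root_.enorm w ^ 2 ≤ δ * _root_.enorm w * _root_.enorm y :=
    calc _root_.enorm w ^ 2 = A *ᵥ scatter 𝒯 w ⬝ᵥ A *ᵥ y := by
          rw [mulVec_scatter_dotProduct, enorm_sq_eq_dotProduct]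
      _ ≤ δ * _root_.enorm (scatter 𝒯 w) * _root_.enorm y :=
          hRIP.dotProduct_mulVec_le (scatter_mul_restr_compl 𝒯 w x) hsupp
      _ = δ * _root_.enorm w * _root_.enorm y := by rw [enorm_scatter_s4]
  nlinarith [enorm_nonneg_s4 w, mul_nonneg hδ0 (enorm_nonneg_s4 y)]

theorem stmt4 {M N T : ℕ} (A : Matrix (Fin M) (Fin N) ℝ) (δ : ℝ)
    (hδ0 : 0 ≤ δ) (hδ1 : δ < 1) (hRIP : RIP A T δ)
    (𝒯 : Finset (Fin N)) (x : Fin N → ℝ)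
    (hcard : (𝒯 ∪ fsupp x).card ≤ T) :
    _root_.enorm ((cols A 𝒯)ᵀ.mulVec (A.mulVec (restr x 𝒯ᶜ))) ≤ δ * _root_.enorm (restr x 𝒯ᶜ) :=
  stmt4_general A δ hδ0 hRIP 𝒯 x hcard
end
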